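/- Let B be a bounded quasinilpotent operator on a Hilbert space H, f, g ∈ H, g(z) := (I − zB)⁻¹ g, f_*(w) := (I + wB*)⁻¹ f and φ(z) := 1 − z⟨g(z), f⟩. If λ is a zero of φ and μ is arbitrary with μ ≠ λ, then ⟨g(λ), f_*(−conj(μ))⟩ = −φ(μ)/(μ − λ). In particular if λ and ν are two distinct zeros of φ, then ⟨g(λ), f_*(−conj(ν))⟩ = 0. -/

import Mathlib

/-!
Since `B` is quasinilpotent, `R z = (1 - z • B)⁻¹` exists for every `z`, and
`f_*(-conj μ) = (R μ)† f`, so the inner product in question is `⟪f, R μ (R λ g)⟫`. The resolvent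
identity `(μ - λ) R μ R λ = μ R μ - λ R λ` rewrites it as
`(μ ⟪f, R μ g⟫ - λ ⟪f, R λ g⟫) / (μ - λ) = (φ λ - φ μ) / (μ - λ)`, which is `-φ μ / (μ - λ)` when
`φ λ = 0` and vanishes when moreover `φ μ = 0`.
-/

open ContinuousLinearMap

section Algebra

variable {R A : Type*} [CommRing R] [Ring A] [Algebra R A]

theorem isUnit_one_sub_smul_of_spectrum_subset_zero {K : Type*} [Field K] [Algebra K A] {a : A}
    (ha : spectrum K a ⊆ {0}) (z : K) : IsUnit (1 - z • a) := by
  rcases eq_or_ne z 0 with rfl | hz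
  · simp
  · have hz' : z⁻¹ ∉ spectrum K a := fun h => inv_ne_zero hz (ha h)
    rw [spectrum.notMem_iff, Algebra.algebraMap_eq_smul_one] at hz'
    simpa using (IsUnit.smul_sub_iff_sub_inv_smul (Units.mk0 z hz)⁻¹ a).mp
      (by simpa [Units.smul_def] using hz')

theorem sub_smul_inverse_one_sub_smul_mul {a : A} {μ ν : R} (hμ : IsUnit (1 - μ • a))
    (hν : IsUnit (1 - ν • a)) :
    (μ - ν) • (Ring.inverse (1 - μ • a) * Ring.inverse (1 - ν • a)) =
      μ • Ring.inverse (1 - μ • a) - ν • Ring.inverse (1 - ν • a) := by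
  set u := 1 - μ • a
  set v := 1 - ν • a
  have key : μ • v - ν • u = (μ - ν) • (1 : A) := by
    simp only [u, v, smul_sub, smul_smul, mul_comm μ ν, sub_smul]
    abel
  calc (μ - ν) • (Ring.inverse u * Ring.inverse v)
      = Ring.inverse u * ((μ - ν) • (1 : A)) * Ring.inverse v := by
        rw [mul_smul_comm, mul_one, smul_mul_assoc]
    _ = Ring.inverse u * (μ • v - ν • u) * Ring.inverse v := by rw [key]
    _ = μ • Ring.inverse u - ν • Ring.inverse v := by
        rw [mul_sub, sub_mul, mul_smul_comm, mul_smul_comm, smul_mul_assoc, smul_mul_assoc,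
          Ring.inverse_mul_cancel u hμ, mul_assoc, Ring.mul_inverse_cancel v hν, one_mul, mul_one]

theorem star_inverse_one_sub_smul [StarRing R] [StarRing A] [StarModule R A] (a : A) (z : R) :
    star (Ring.inverse (1 - z • a)) = Ring.inverse (1 - star z • star a) := by
  rw [← Ring.inverse_star, star_sub, star_one, star_smul]

end Algebra

theorem inner_adjoint_inverse_one_sub_smul {𝕜 H : Type*} [RCLike 𝕜] [NormedAddCommGroup H]
    [InnerProductSpace 𝕜 H] [CompleteSpace H] {B : H →L[𝕜] H} {μ ν : 𝕜}
    (hμ : IsUnit (1 - μ • B)) (hν : IsUnit (1 - ν • B)) (hne : μ ≠ ν) (f g : H) :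
    inner 𝕜 (adjoint (Ring.inverse (1 - μ • B)) f) (Ring.inverse (1 - ν • B) g) =
      (μ - ν)⁻¹ * (μ * inner 𝕜 f (Ring.inverse (1 - μ • B) g) -
        ν * inner 𝕜 f (Ring.inverse (1 - ν • B) g)) := by
  have hres : Ring.inverse (1 - μ • B) * Ring.inverse (1 - ν • B) =
      (μ - ν)⁻¹ • (μ • Ring.inverse (1 - μ • B) - ν • Ring.inverse (1 - ν • B)) := by
    rw [← sub_smul_inverse_one_sub_smul_mul hμ hν, smul_smul,
      inv_mul_cancel₀ (sub_ne_zero.mpr hne), one_smul]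
  rw [adjoint_inner_left, ← mul_apply_eq_comp, hres]
  simp only [smul_apply, sub_apply, inner_smul_right, inner_sub_right]

theorem biorthogonality_at_zero
    {H : Type*} [NormedAddCommGroup H] [InnerProductSpace ℂ H] [CompleteSpace H]
    (B : H →L[ℂ] H) (hB : spectrum ℂ B = {0}) (f g : H)
    (gfun : ℂ → H) (hg : ∀ z : ℂ, gfun z = (Ring.inverse (1 - z • B) : H →L[ℂ] H) g)
    (fstar : ℂ → H)
    (hf : ∀ w : ℂ,
      fstar w = (Ring.inverse (1 + w • ContinuousLinearMap.adjoint B) : H →L[ℂ] H) f)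
    (φ : ℂ → ℂ) (hφ : ∀ z : ℂ, φ z = 1 - z * (inner ℂ f (gfun z) : ℂ)) :
    (∀ lam mu : ℂ, φ lam = 0 → mu ≠ lam →
        (inner ℂ (fstar (-(starRingEnd ℂ mu))) (gfun lam) : ℂ) = -φ mu / (mu - lam)) ∧
      (∀ lam nu : ℂ, φ lam = 0 → φ nu = 0 → lam ≠ nu →
        (inner ℂ (fstar (-(starRingEnd ℂ nu))) (gfun lam) : ℂ) = 0) := by
  have hU := isUnit_one_sub_smul_of_spectrum_subset_zero hB.subset (A := H →L[ℂ] H)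
  have hfstar : ∀ z : ℂ, fstar (-(starRingEnd ℂ z)) = adjoint (Ring.inverse (1 - z • B)) f := by
    intro z
    rw [hf, ← star_eq_adjoint, ← star_eq_adjoint, star_inverse_one_sub_smul, neg_smul,
      ← sub_eq_add_neg, Complex.star_def]
  have key : ∀ lam mu : ℂ, mu ≠ lam →
      inner ℂ (fstar (-(starRingEnd ℂ mu))) (gfun lam) = (φ lam - φ mu) / (mu - lam) := by
    intro lam mu hne
    rw [hfstar, hg, inner_adjoint_inverse_one_sub_smul (hU mu) (hU lam) hne, hφ, hφ, hg, hg]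
    ring
  refine ⟨fun lam mu hlam hne => ?_, fun lam nu hlam hnu hne => ?_⟩
  · rw [key lam mu hne, hlam, zero_sub]
  · rw [key lam nu hne.symm, hlam, hnu, sub_zero, zero_div]
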